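/- arXiv:math/9903095 — 2 statements merged into one kernel-verified Lean document; each statement's English description precedes it below -/
import Mathlib

section
/- For every real t ≥ 0 and every x = (x_1,…,x_d) ∈ ℤ^d, the discrete heat kernel satisfies e^{−2td} · t^{|x|} / (∏_{i=1}^d |x_i|!) ≤ p_t(0, x) ≤ t^{|x|} / (∏_{i=1}^d |x_i|!). -/
noncomputable section

open scoped ENNReal BigOperators

namespace Paper

variable {α : Type*}

/-- The real Hilbert space `ℓ²` over the index set `α`. -/
abbrev L2 (α : Type*) := lp (fun _ : α => ℝ) 2

lemma memℓp_comp (e : α ≃ α) (f : L2 α) : Memℓp (fun x => f (e x)) (2 : ℝ≥0∞) := by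
  have h2 : (0:ℝ) < (2 : ℝ≥0∞).toReal := by norm_num
  rw [memℓp_gen_iff h2]
  have hf := lp.memℓp f
  rw [memℓp_gen_iff h2] at hf
  exact (e.summable_iff (f := fun i => ‖f i‖ ^ (2 : ℝ≥0∞).toReal)).2 hf

/-- Reindexing along an equivalence of the index set, as a bounded operator on `ℓ²`. -/
def shiftCLM (e : α ≃ α) : L2 α →L[ℝ] L2 α :=
  LinearMap.mkContinuous
    { toFun := fun f => ⟨fun x => f (e x), memℓp_comp e f⟩
      map_add' := by
        intro f g; apply lp.ext; funext x; simp [lp.coeFn_add]; rfl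
      map_smul' := by
        intro c f; apply lp.ext; funext x; simp [lp.coeFn_smul] }
    1
    (by
      intro f
      rw [one_mul]
      have h2 : (0:ℝ) < (2 : ℝ≥0∞).toReal := by norm_num
      have key : ∀ g : L2 α, ‖g‖ = (∑' i, ‖g i‖ ^ (2 : ℝ≥0∞).toReal) ^ ((2 : ℝ≥0∞).toReal)⁻¹ := by
        intro g
        rw [lp.norm_eq_tsum_rpow h2 g, one_div]
      rw [key, key]
      refine le_of_eq (congrArg (· ^ ((2 : ℝ≥0∞).toReal)⁻¹) ?_)
      exact e.tsum_eq (f := fun i => ‖f i‖ ^ (2 : ℝ≥0∞).toReal))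

@[simp] lemma shiftCLM_apply (e : α ≃ α) (f : L2 α) (x : α) :
    shiftCLM e f x = f (e x) := rfl

/-- The discrete Laplacian on `ℤ^d`, as a bounded operator on `ℓ²(ℤ^d)`:
`(Δ f)(x) = ∑_{y ∈ N(x)} f(y) - 2d f(x)`, where the set `N(x)` of nearest neighbors of
`x` (points of `ℤ^d` at Euclidean distance 1 from `x`) consists of the `2d` points
`x ± eᵢ`, `1 ≤ i ≤ d`. -/
def discreteLaplacian (d : ℕ) : L2 (Fin d → ℤ) →L[ℝ] L2 (Fin d → ℤ) :=
  (∑ i : Fin d,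
      (shiftCLM (Equiv.addRight (Pi.single i 1 : Fin d → ℤ)) +
       shiftCLM (Equiv.addRight (-Pi.single i 1 : Fin d → ℤ))))
  - (2 * (d : ℝ)) • ContinuousLinearMap.id ℝ (L2 (Fin d → ℤ))

/-- The discrete heat kernel `p_t(x,y) := (exp(tΔ) δ_y)(x)` on `ℤ^d`, where `exp` is the
exponential of bounded operators and `δ_y ∈ ℓ²(ℤ^d)` is the indicator function of `y`. -/
def heatKernel (d : ℕ) (t : ℝ) (x y : Fin d → ℤ) : ℝ :=
  (NormedSpace.exp (t • discreteLaplacian d) (lp.single 2 y (1:ℝ))) x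

/-- The generator of continuous-time simple symmetric random walk on `ℤ` with jump
rate `lam`: `(Q_lam f)(x) = (lam/2)(f(x+1)+f(x-1)) - lam·f(x)`. -/
def walkGen (lam : ℝ) : L2 ℤ →L[ℝ] L2 ℤ :=
  (lam / 2) • (shiftCLM (Equiv.addRight (1:ℤ)) + shiftCLM (Equiv.addRight (-1:ℤ)))
    - lam • ContinuousLinearMap.id ℝ (L2 ℤ)

/-- `p_t^{(lam)}(x) := (exp(t Q_lam) δ_0)(x)`, the transition probability of the
rate-`lam` continuous-time simple symmetric random walk on `ℤ` started at `0`. -/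
def walkKernel (lam : ℝ) (t : ℝ) (x : ℤ) : ℝ :=
  (NormedSpace.exp (t • walkGen lam) (lp.single 2 (0:ℤ) (1:ℝ))) x

/-- `|x| = ∑ᵢ |xᵢ|` for `x ∈ ℤ^d`. -/
def l1norm {d : ℕ} (x : Fin d → ℤ) : ℕ := ∑ i, (x i).natAbs

end Paper

open Paper

/-!
Write `Δ = S - 2d`, where `S` is the sum of the `2d` unit translations. As `2d` is a scalar,
`exp(tΔ) = e^{-2td} exp(tS)`, and since the translations represent the group algebra of `ℤ^d`,
expanding `exp(tS)` gives `p_t(0,x) = e^{-2td} ∑ₙ tⁿ/n! Wₙ(x)`, where `Wₙ(x)` counts the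
`n`-step nearest-neighbour walks from `0` to `x`. There are none for `n < |x|`, and
`W_{|x|}(x) = |x|!/∏ᵢ |xᵢ|!`: this single term is the lower bound. A walk of length `|x| + n`
with `a` steps `+eᵢ` and `b` steps `-eᵢ` makes `sᵢ = a + b - |xᵢ|` surplus steps in direction
`i`, and `|xᵢ|! sᵢ! ≤ 2^{sᵢ} a! b!`. Since the step counts of a walk are determined by `s` and
`∑_{|s| = n} multinomial(s) = dⁿ`, this gives `W_{|x|+n}(x) ≤ (|x|+n)! (2d)ⁿ / (n! ∏ᵢ |xᵢ|!)`,
and summing the series gives the upper bound.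
-/

open Finset
open scoped Nat

lemma Nat.factorial_sub_mul_factorial_two_mul_le {a b : ℕ} (h : b ≤ a) :
    (a - b)! * (2 * b)! ≤ 4 ^ b * (a ! * b !) := by
  have hcentral : (2 * b)! = Nat.centralBinom b * b ! * b ! := by
    rw [Nat.centralBinom_eq_two_mul_choose, ← Nat.choose_mul_factorial_mul_factorial
      (by omega : b ≤ 2 * b), show 2 * b - b = b by omega]
  have hsplit : (a - b)! * b ! ≤ a ! := by
    simpa [Nat.sub_add_cancel h] using
      Nat.le_of_dvd (Nat.factorial_pos _) (Nat.factorial_mul_factorial_dvd_factorial_add (a - b) b)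
  calc (a - b)! * (2 * b)! = Nat.centralBinom b * b ! * ((a - b)! * b !) := by
        rw [hcentral]; ring
    _ ≤ 4 ^ b * b ! * a ! := by gcongr; exact Nat.centralBinom_le_four_pow b
    _ = 4 ^ b * (a ! * b !) := by ring

lemma Nat.factorial_natAbs_sub_mul_factorial_le (a b : ℕ) :
    ((a : ℤ) - b).natAbs ! * (a + b - ((a : ℤ) - b).natAbs)!
      ≤ 2 ^ (a + b - ((a : ℤ) - b).natAbs) * (a ! * b !) := by
  rcases le_total b a with h | h
  · rw [show ((a : ℤ) - b).natAbs = a - b by omega, show a + b - (a - b) = 2 * b by omega,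
      pow_mul]
    exact Nat.factorial_sub_mul_factorial_two_mul_le h
  · rw [show ((a : ℤ) - b).natAbs = b - a by omega, show a + b - (b - a) = 2 * a by omega,
      pow_mul, mul_comm (a !)]
    exact Nat.factorial_sub_mul_factorial_two_mul_le h

lemma Nat.sum_multinomial_piAntidiag (ι : Type*) [Fintype ι] [DecidableEq ι] (n : ℕ) :
    ∑ q ∈ piAntidiag (univ : Finset ι) n, Nat.multinomial univ q = Fintype.card ι ^ n := by
  simpa using (sum_pow_eq_sum_piAntidiag (univ : Finset ι) (fun _ => (1 : ℕ)) n).symm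

lemma Fintype.sum_prod_bool {ι M : Type*} [Fintype ι] [AddCommMonoid M]
    (k : ι × Bool → M) : ∑ j, k j = ∑ i, (k (i, true) + k (i, false)) := by
  simp [Fintype.sum_prod_type]

lemma NormedSpace.exp_sub_smul_one {𝔸 : Type*} [NormedRing 𝔸] [NormedAlgebra ℝ 𝔸]
    [CompleteSpace 𝔸] (a : 𝔸) (c : ℝ) :
    NormedSpace.exp (a - c • 1) = Real.exp (-c) • NormedSpace.exp a := by
  rw [sub_eq_add_neg, ← neg_smul, ← Algebra.algebraMap_eq_smul_one,
    NormedSpace.exp_add_of_commute_of_mem_ball (𝕂 := ℝ) (Algebra.commutes _ _).symm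
      (NormedSpace.expSeries_radius_eq_top ℝ 𝔸 ▸ edist_lt_top _ _)
      (NormedSpace.expSeries_radius_eq_top ℝ 𝔸 ▸ edist_lt_top _ _),
    ← NormedSpace.algebraMap_exp_comm,
    ← Real.exp_eq_exp_ℝ, ← Algebra.commutes, Algebra.smul_def]

lemma HasSum.le_mul_exp_of_le {f : ℕ → ℝ} {s a c : ℝ} {m : ℕ} (hf : HasSum f s)
    (hzero : ∀ n < m, f n = 0) (hle : ∀ n, f (m + n) ≤ a * (c ^ n / n !)) :
    s ≤ a * Real.exp c := by
  have hshift : HasSum (fun n => f (n + m)) (s - ∑ n ∈ range m, f n) :=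
    (hasSum_nat_add_iff' m).2 hf
  rw [sum_eq_zero fun n hn => hzero n (mem_range.1 hn), sub_zero] at hshift
  have hexp : HasSum (fun n : ℕ => a * (c ^ n / n !)) (a * Real.exp c) := by
    rw [Real.exp_eq_exp_ℝ]
    exact (NormedSpace.expSeries_div_hasSum_exp c).mul_left a
  exact hasSum_le (fun n => by rw [add_comm]; exact hle n) hshift hexp

namespace Paper

section Shift

variable {α : Type*} [AddGroup α]

def shiftHom : Multiplicative α →* (L2 α →L[ℝ] L2 α) where
  toFun v := shiftCLM (Equiv.addRight v.toAdd)
  map_one' := by ext f x; simp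
  map_mul' a b := by ext f x; simp [add_assoc]

def shiftAlgHom : AddMonoidAlgebra ℝ α →ₐ[ℝ] (L2 α →L[ℝ] L2 α) :=
  AddMonoidAlgebra.lift ℝ _ α shiftHom

lemma shiftAlgHom_apply_single_zero [DecidableEq α] (p : AddMonoidAlgebra ℝ α) (x : α) :
    shiftAlgHom p (lp.single 2 x 1) 0 = p.coeff x := by
  induction p using AddMonoidAlgebra.induction_linear with
  | zero => simp
  | add p q hp hq => simp [hp, hq]
  | single y c => simp [shiftAlgHom, shiftHom, Pi.single_apply, Finsupp.single_apply]

lemma hasSum_exp_smul_shiftAlgHom_apply_single_zero [DecidableEq α] (t : ℝ)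
    (p : AddMonoidAlgebra ℝ α) (x : α) :
    HasSum (fun n : ℕ => t ^ n / n ! * (p ^ n).coeff x)
      (NormedSpace.exp (t • shiftAlgHom p) (lp.single 2 x 1) 0) := by
  let evalAt : (L2 α →L[ℝ] L2 α) →L[ℝ] ℝ :=
    (lp.evalCLM ℝ _ 2 0).comp (ContinuousLinearMap.apply ℝ (L2 α) (lp.single 2 x 1))
  refine ((NormedSpace.exp_series_hasSum_exp' (𝕂 := ℝ) (t • shiftAlgHom p)).mapL
    evalAt).congr_fun fun n => ?_
  simp [evalAt, lp.evalCLM, smul_pow, ← map_pow, shiftAlgHom_apply_single_zero]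
  ring

end Shift

section Walks

variable {ι α : Type*} [Fintype ι] [DecidableEq ι] [AddCommMonoid α] [DecidableEq α]

/-- The number of `n`-step walks from `0` to `x` with steps in `v`: a walk making `k i` steps
`v i` is one of `multinomial k` orderings of them. -/
def walkCount (v : ι → α) (n : ℕ) (x : α) : ℕ :=
  ∑ k ∈ piAntidiag univ n with ∑ i, k i • v i = x, Nat.multinomial univ k

lemma coeff_sum_single_pow {R : Type*} [CommSemiring R] (v : ι → α) (n : ℕ) (x : α) :
    ((∑ i, AddMonoidAlgebra.single (v i) (1 : R)) ^ n).coeff x = walkCount v n x := by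
  simp only [sum_pow_eq_sum_piAntidiag, AddMonoidAlgebra.single_pow, one_pow,
    AddMonoidAlgebra.prod_single, prod_const_one, walkCount, ← nsmul_eq_mul,
    AddMonoidAlgebra.coeff_sum, Finsupp.finsetSum_apply, sum_filter, Nat.cast_sum]
  refine sum_congr rfl fun k _ => ?_
  split_ifs with h <;> simp [h]

end Walks

def latticeStep (d : ℕ) (j : Fin d × Bool) : Fin d → ℤ :=
  if j.2 then Pi.single j.1 1 else -Pi.single j.1 1

lemma discreteLaplacian_eq (d : ℕ) :
    discreteLaplacian d =
      shiftAlgHom (∑ j, AddMonoidAlgebra.single (latticeStep d j) 1) - (2 * d : ℝ) • 1 := by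
  simp only [discreteLaplacian, shiftAlgHom, map_sum, Fintype.sum_prod_type, Fintype.sum_bool,
    map_add, AddMonoidAlgebra.lift_single, one_smul, latticeStep, if_true, Bool.false_eq_true,
    if_false]
  rfl

lemma hasSum_heatKernel (d : ℕ) (t : ℝ) (x : Fin d → ℤ) :
    HasSum (fun n : ℕ => Real.exp (-(2 * t * d)) * (t ^ n / n ! * walkCount (latticeStep d) n x))
      (heatKernel d t 0 x) := by
  have h := (hasSum_exp_smul_shiftAlgHom_apply_single_zero t
    (∑ j, AddMonoidAlgebra.single (latticeStep d j) 1) x).mul_left (Real.exp (-(2 * t * d)))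
  simp only [coeff_sum_single_pow] at h
  unfold heatKernel
  rw [discreteLaplacian_eq, smul_sub, smul_smul, show t * (2 * (d : ℝ)) = 2 * t * d by ring,
    NormedSpace.exp_sub_smul_one]
  exact h

section Lattice

variable {d : ℕ}

lemma sum_smul_latticeStep_apply (k : Fin d × Bool → ℕ) (i : Fin d) :
    (∑ j, k j • latticeStep d j) i = k (i, true) - k (i, false) := by
  simp [Fintype.sum_prod_type, latticeStep, Pi.single_apply, sum_add_distrib, sub_eq_add_neg]

lemma natAbs_le_of_sum_smul_latticeStep_eq {k : Fin d × Bool → ℕ} {x : Fin d → ℤ}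
    (hx : ∑ j, k j • latticeStep d j = x) (i : Fin d) :
    (x i).natAbs ≤ k (i, true) + k (i, false) := by
  have := sum_smul_latticeStep_apply k i
  rw [hx] at this
  omega

lemma l1norm_le_of_sum_smul_latticeStep_eq {k : Fin d × Bool → ℕ} {x : Fin d → ℤ}
    (hx : ∑ j, k j • latticeStep d j = x) : l1norm x ≤ ∑ j, k j := by
  rw [Fintype.sum_prod_bool]
  exact sum_le_sum fun i _ => natAbs_le_of_sum_smul_latticeStep_eq hx i

lemma walkCount_eq_zero_of_lt {n : ℕ} {x : Fin d → ℤ} (h : n < l1norm x) :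
    walkCount (latticeStep d) n x = 0 := by
  refine sum_eq_zero fun k hk => absurd h (not_lt.2 ?_)
  rw [mem_filter, mem_piAntidiag] at hk
  exact hk.1.1 ▸ l1norm_le_of_sum_smul_latticeStep_eq hk.2

lemma factorial_l1norm_le_walkCount_mul (x : Fin d → ℤ) :
    (l1norm x)! ≤ walkCount (latticeStep d) (l1norm x) x * ∏ i, (x i).natAbs ! := by
  let k : Fin d × Bool → ℕ := fun j => if j.2 then (x j.1).toNat else (-x j.1).toNat
  have hsum : ∑ j, k j = l1norm x := by
    rw [Fintype.sum_prod_bool]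
    exact sum_congr rfl fun i _ => by simp [k]
  have hprod : ∏ j, (k j)! = ∏ i, (x i).natAbs ! := by
    simp only [Fintype.prod_prod_type, Fintype.prod_bool]
    refine prod_congr rfl fun i _ => ?_
    rcases le_total 0 (x i) with h | h
    · simp only [k, ↓reduceIte, Bool.false_eq_true, Int.toNat_eq_zero.2 (neg_nonpos.2 h),
        Nat.factorial_zero, mul_one]
      congr 1; omega
    · simp only [k, ↓reduceIte, Bool.false_eq_true, Int.toNat_eq_zero.2 h, Nat.factorial_zero,
        one_mul]
      congr 1; omega
  have hk : k ∈ {k ∈ piAntidiag (univ : Finset (Fin d × Bool)) (l1norm x) |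
      ∑ j, k j • latticeStep d j = x} := by
    refine mem_filter.2 ⟨mem_piAntidiag.2 ⟨hsum, by simp⟩, funext fun i => ?_⟩
    rw [sum_smul_latticeStep_apply]
    simp [k]
  calc (l1norm x)! = Nat.multinomial univ k * ∏ j, (k j)! := by
        rw [mul_comm, Nat.multinomial_spec, hsum]
    _ ≤ walkCount (latticeStep d) (l1norm x) x * ∏ i, (x i).natAbs ! := by
        rw [hprod]
        exact Nat.mul_le_mul_right _ (single_le_sum (fun _ _ => Nat.zero_le _) hk)

def surplusSteps (x : Fin d → ℤ) (k : Fin d × Bool → ℕ) (i : Fin d) : ℕ :=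
  k (i, true) + k (i, false) - (x i).natAbs

lemma sum_surplusSteps {k : Fin d × Bool → ℕ} {x : Fin d → ℤ}
    (hx : ∑ j, k j • latticeStep d j = x) :
    ∑ i, surplusSteps x k i = ∑ j, k j - l1norm x := by
  have h : ∑ i, (surplusSteps x k i + (x i).natAbs) = ∑ j, k j := by
    rw [Fintype.sum_prod_bool]
    exact sum_congr rfl fun i _ => Nat.sub_add_cancel (natAbs_le_of_sum_smul_latticeStep_eq hx i)
  rw [sum_add_distrib] at h
  rw [l1norm]
  omega

lemma surplusSteps_injective {k k' : Fin d × Bool → ℕ} {x : Fin d → ℤ}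
    (hx : ∑ j, k j • latticeStep d j = x) (hx' : ∑ j, k' j • latticeStep d j = x)
    (h : surplusSteps x k = surplusSteps x k') : k = k' := by
  funext ⟨i, b⟩
  have hs := congrFun h i
  have h₁ := sum_smul_latticeStep_apply k i
  have h₂ := sum_smul_latticeStep_apply k' i
  rw [hx] at h₁
  rw [hx'] at h₂
  simp only [surplusSteps] at hs
  cases b <;> omega

lemma multinomial_mul_le {k : Fin d × Bool → ℕ} {x : Fin d → ℤ}
    (hx : ∑ j, k j • latticeStep d j = x) :
    Nat.multinomial univ k * ((∑ i, surplusSteps x k i)! * ∏ i, (x i).natAbs !)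
      ≤ (∑ j, k j)! * 2 ^ (∑ i, surplusSteps x k i)
          * Nat.multinomial univ (surplusSteps x k) := by
  have hcoord : (∏ i, (x i).natAbs !) * ∏ i, (surplusSteps x k i)!
      ≤ 2 ^ (∑ i, surplusSteps x k i) * ∏ j, (k j)! := by
    rw [← prod_mul_distrib, ← prod_pow_eq_pow_sum, Fintype.prod_prod_type, ← prod_mul_distrib]
    refine prod_le_prod' fun i _ => ?_
    have hxi : x i = k (i, true) - k (i, false) := by rw [← hx, sum_smul_latticeStep_apply]
    simpa [surplusSteps, hxi] using
      Nat.factorial_natAbs_sub_mul_factorial_le (k (i, true)) (k (i, false))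
  calc Nat.multinomial univ k * ((∑ i, surplusSteps x k i)! * ∏ i, (x i).natAbs !)
      = Nat.multinomial univ k * ((∏ i, (x i).natAbs !) * ∏ i, (surplusSteps x k i)!)
          * Nat.multinomial univ (surplusSteps x k) := by
        rw [← Nat.multinomial_spec]; ring
    _ ≤ Nat.multinomial univ k * (2 ^ (∑ i, surplusSteps x k i) * ∏ j, (k j)!)
          * Nat.multinomial univ (surplusSteps x k) := by gcongr
    _ = _ := by rw [← Nat.multinomial_spec]; ring

lemma walkCount_mul_le (x : Fin d → ℤ) (n : ℕ) :
    walkCount (latticeStep d) (l1norm x + n) x * (n ! * ∏ i, (x i).natAbs !)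
      ≤ (l1norm x + n)! * (2 * d) ^ n := by
  set walks := {k ∈ piAntidiag (univ : Finset (Fin d × Bool)) (l1norm x + n) |
    ∑ j, k j • latticeStep d j = x}
  have hmem : ∀ k ∈ walks, ∑ j, k j = l1norm x + n ∧ ∑ j, k j • latticeStep d j = x := by
    simp [walks, mem_piAntidiag]
  have hsurplus : ∀ k ∈ walks, ∑ i, surplusSteps x k i = n := fun k hk => by
    rw [sum_surplusSteps (hmem k hk).2, (hmem k hk).1, Nat.add_sub_cancel_left]
  calc walkCount (latticeStep d) (l1norm x + n) x * (n ! * ∏ i, (x i).natAbs !)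
      = ∑ k ∈ walks,
          Nat.multinomial univ k * ((∑ i, surplusSteps x k i)! * ∏ i, (x i).natAbs !) := by
        rw [walkCount, sum_mul]
        exact sum_congr rfl fun k hk => by rw [hsurplus k hk]
    _ ≤ ∑ k ∈ walks, (l1norm x + n)! * 2 ^ n * Nat.multinomial univ (surplusSteps x k) := by
        refine sum_le_sum fun k hk => ?_
        simpa [hsurplus k hk, (hmem k hk).1] using multinomial_mul_le (hmem k hk).2
    _ = (l1norm x + n)! * 2 ^ n * ∑ q ∈ walks.image (surplusSteps x), Nat.multinomial univ q := by
        rw [sum_image fun k hk k' hk' => surplusSteps_injective (hmem k hk).2 (hmem k' hk').2,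
          mul_sum]
    _ ≤ (l1norm x + n)! * 2 ^ n
          * ∑ q ∈ piAntidiag (univ : Finset (Fin d)) n, Nat.multinomial univ q := by
        gcongr
        intro q hq
        obtain ⟨k, hk, rfl⟩ := mem_image.1 hq
        exact mem_piAntidiag.2 ⟨hsurplus k hk, by simp⟩
    _ = (l1norm x + n)! * (2 * d) ^ n := by
        rw [Nat.sum_multinomial_piAntidiag, Fintype.card_fin, mul_pow, mul_assoc]

lemma pow_div_le_pow_div_factorial_mul_walkCount {t : ℝ} (ht : 0 ≤ t) (x : Fin d → ℤ) :
    t ^ l1norm x / (∏ i, (x i).natAbs ! : ℕ)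
      ≤ t ^ l1norm x / (l1norm x)! * walkCount (latticeStep d) (l1norm x) x := by
  rw [div_mul_eq_mul_div, div_le_div_iff₀ (by positivity) (by positivity), mul_assoc]
  gcongr
  exact_mod_cast factorial_l1norm_le_walkCount_mul x

lemma pow_div_factorial_mul_walkCount_le {t : ℝ} (ht : 0 ≤ t) (x : Fin d → ℤ) (n : ℕ) :
    t ^ (l1norm x + n) / (l1norm x + n)! * walkCount (latticeStep d) (l1norm x + n) x
      ≤ t ^ l1norm x / (∏ i, (x i).natAbs ! : ℕ) * ((2 * d * t) ^ n / n !) := by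
  have h : (walkCount (latticeStep d) (l1norm x + n) x : ℝ) * (n ! * (∏ i, (x i).natAbs ! : ℕ))
      ≤ (l1norm x + n)! * (2 * d) ^ n := by
    exact_mod_cast walkCount_mul_le x n
  rw [div_mul_eq_mul_div, div_mul_div_comm, div_le_div_iff₀ (by positivity) (by positivity)]
  calc _ = t ^ l1norm x * t ^ n * ((walkCount (latticeStep d) (l1norm x + n) x : ℝ)
        * (n ! * (∏ i, (x i).natAbs ! : ℕ))) := by ring
    _ ≤ t ^ l1norm x * t ^ n * ((l1norm x + n)! * (2 * d) ^ n) := by gcongr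
    _ = _ := by ring

end Lattice

end Paper

theorem heatKernel_two_sided_bounds_general {d : ℕ} (t : ℝ) (ht : 0 ≤ t)
    (x : Fin d → ℤ) :
    Real.exp (-(2 * t * d)) * t ^ l1norm x /
        ((∏ i : Fin d, Nat.factorial (x i).natAbs : ℕ) : ℝ) ≤ heatKernel d t 0 x ∧
      heatKernel d t 0 x ≤
        t ^ l1norm x / ((∏ i : Fin d, Nat.factorial (x i).natAbs : ℕ) : ℝ) := by
  have hs := hasSum_heatKernel d t x
  constructor
  · calc Real.exp (-(2 * t * d)) * t ^ l1norm x / (∏ i, (x i).natAbs ! : ℕ)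
        = Real.exp (-(2 * t * d)) * (t ^ l1norm x / (∏ i, (x i).natAbs ! : ℕ)) :=
          mul_div_assoc ..
      _ ≤ Real.exp (-(2 * t * d)) *
            (t ^ l1norm x / (l1norm x)! * walkCount (latticeStep d) (l1norm x) x) := by
          gcongr; exact pow_div_le_pow_div_factorial_mul_walkCount ht x
      _ ≤ heatKernel d t 0 x := le_hasSum hs _ fun n _ => by positivity
  · calc heatKernel d t 0 x
        ≤ Real.exp (-(2 * t * d)) * (t ^ l1norm x / (∏ i, (x i).natAbs ! : ℕ))
          * Real.exp (2 * d * t) := by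
          refine hs.le_mul_exp_of_le (m := l1norm x)
            (fun n hn => by simp [walkCount_eq_zero_of_lt hn]) fun n => ?_
          rw [mul_assoc (Real.exp _)]
          exact mul_le_mul_of_nonneg_left (pow_div_factorial_mul_walkCount_le ht x n)
            (Real.exp_nonneg _)
      _ = t ^ l1norm x / (∏ i, (x i).natAbs ! : ℕ) := by
          rw [mul_right_comm, ← Real.exp_add, show -(2 * t * d) + 2 * d * t = 0 by ring,
            Real.exp_zero, one_mul]

/-- Lemma 4.3 (Lemma 3.6): two-sided bounds on the transition probabilities of
continuous-time simple symmetric random walk on `ℤ^d` with jump rate `2d`: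
`e^{-2td} t^{|x|} / ∏ᵢ |xᵢ|! ≤ p_t(0,x) ≤ t^{|x|} / ∏ᵢ |xᵢ|!`. -/
theorem heatKernel_two_sided_bounds {d : ℕ} (hd : 1 ≤ d) (t : ℝ) (ht : 0 ≤ t)
    (x : Fin d → ℤ) :
    Real.exp (-(2 * t * d)) * t ^ l1norm x /
        ((∏ i : Fin d, Nat.factorial (x i).natAbs : ℕ) : ℝ) ≤ heatKernel d t 0 x ∧
      heatKernel d t 0 x ≤
        t ^ l1norm x / ((∏ i : Fin d, Nat.factorial (x i).natAbs : ℕ) : ℝ) :=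
  heatKernel_two_sided_bounds_general t ht x
end
end

section
/- Let d ≥ 1 be an integer, T > 0, and let p : [0,T] × ℤ^d × ℤ^d → [0, ∞) satisfy: (i) p_t(x,y) = p_t(y,x) for all t ∈ [0,T] and x, y ∈ ℤ^d; (ii) for every μ > 0 there is a finite constant c(T,μ) such that ∑_{y ∈ ℤ^d} p_t(x,y) e^{μ|y|} ≤ c(T,μ) e^{μ|x|} for all t ∈ [0,T] and x ∈ ℤ^d; (iii) ε_0 := inf { p_s(x,x) : s ∈ [0,T], x ∈ ℤ^d } > 0. Then for every λ > 0 and every ε with 0 < ε < λ there is a finite constant C = C(T, ε, λ) such that for all t ∈ [0,T] and all x ∈ ℤ^d: ε_0 · e^{−λ|x|} ≤ ∑_{y ∈ ℤ^d} p_t(x,y) e^{−λ|y|} ≤ C · e^{(−λ+ε)|x|}. -/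
open scoped BigOperators

lemma summable_exp_neg_natAbs {a : ℝ} (ha : 0 < a) :
    Summable fun z : ℤ => Real.exp (-a * ((z.natAbs : ℝ))) := by
  have hnat : Summable fun n : ℕ => Real.exp ((n : ℝ) * (-a)) :=
    Real.summable_exp_nat_mul_iff.mpr (by linarith)
  apply Summable.of_nat_of_neg
  · refine hnat.congr fun n => ?_
    simp [mul_comm]
  · refine hnat.congr fun n => ?_
    simp [mul_comm]

set_option maxHeartbeats 1000000 in
lemma summable_exp_neg_pi {a : ℝ} (ha : 0 < a) (d : ℕ) :
    Summable fun y : Fin d → ℤ => Real.exp (-a * ∑ i, ((y i).natAbs : ℝ)) := by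
  induction d with
  | zero =>
    exact Summable.of_finite
  | succ n ih =>
    have hZ := summable_exp_neg_natAbs ha
    have hprod : Summable fun z : ℤ × (Fin n → ℤ) =>
        Real.exp (-a * ((z.1.natAbs : ℝ))) * Real.exp (-a * ∑ i, ((z.2 i).natAbs : ℝ)) :=
      Summable.mul_of_nonneg hZ ih (fun _ => Real.exp_nonneg _) (fun _ => Real.exp_nonneg _)
    have h2 : Summable ((fun z : ℤ × (Fin n → ℤ) =>
        Real.exp (-a * ((z.1.natAbs : ℝ))) * Real.exp (-a * ∑ i, ((z.2 i).natAbs : ℝ))) ∘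
        (Fin.consEquiv fun _ => ℤ).symm) :=
      hprod.comp_injective (Fin.consEquiv fun _ => ℤ).symm.injective
    refine h2.congr fun y => ?_
    simp only [Function.comp, Fin.consEquiv_symm_apply]
    rw [← Real.exp_add, Fin.sum_univ_succ]
    congr 1
    simp [Fin.consEquiv, Fin.tail]
    ring

/-- Lemma 4.2 (Lemma 3.8): for a symmetric nonnegative kernel `p` on `ℤ^d` satisfying
the exponential moment bound (H3)/(4.3) and the uniform on-diagonal lower bound (4.4),
for every `0 < ε < λ` there is a constant `C` with
`ε₀ e^{-λ|x|} ≤ ∑_y p_t(x,y) e^{-λ|y|} ≤ C e^{(-λ+ε)|x|}` for all `t ∈ [0,T]`, `x ∈ ℤ^d`,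
where `ε₀ = inf {p_s(x,x) : s ∈ [0,T], x ∈ ℤ^d}`. -/
theorem kernel_exp_weight_bounds {d : ℕ} (hd : 1 ≤ d) (T : ℝ) (hT : 0 < T)
    (p : ℝ → (Fin d → ℤ) → (Fin d → ℤ) → ℝ)
    (hpos : ∀ t ∈ Set.Icc (0 : ℝ) T, ∀ x y, 0 ≤ p t x y)
    (hsymm : ∀ t ∈ Set.Icc (0 : ℝ) T, ∀ x y, p t x y = p t y x)
    (hexp : ∀ μ : ℝ, 0 < μ → ∃ c : ℝ, ∀ t ∈ Set.Icc (0 : ℝ) T, ∀ x : Fin d → ℤ,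
      (Summable fun y : Fin d → ℤ =>
        p t x y * Real.exp (μ * ∑ i, ((y i).natAbs : ℝ))) ∧
      ∑' y : Fin d → ℤ, p t x y * Real.exp (μ * ∑ i, ((y i).natAbs : ℝ)) ≤
        c * Real.exp (μ * ∑ i, ((x i).natAbs : ℝ)))
    (hdiag : 0 < sInf {r : ℝ | ∃ s ∈ Set.Icc (0 : ℝ) T, ∃ x : Fin d → ℤ, p s x x = r}) :
    ∀ lam ε : ℝ, 0 < lam → 0 < ε → ε < lam →
      ∃ C : ℝ, ∀ t ∈ Set.Icc (0 : ℝ) T, ∀ x : Fin d → ℤ,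
        sInf {r : ℝ | ∃ s ∈ Set.Icc (0 : ℝ) T, ∃ x : Fin d → ℤ, p s x x = r} *
            Real.exp (-lam * ∑ i, ((x i).natAbs : ℝ)) ≤
          (∑' y : Fin d → ℤ, p t x y * Real.exp (-lam * ∑ i, ((y i).natAbs : ℝ))) ∧
        (∑' y : Fin d → ℤ, p t x y * Real.exp (-lam * ∑ i, ((y i).natAbs : ℝ))) ≤
          C * Real.exp ((-lam + ε) * ∑ i, ((x i).natAbs : ℝ)) := by
  intro lam ε hlam hε hεlam
  set N : (Fin d → ℤ) → ℝ := fun x => ∑ i, ((x i).natAbs : ℝ) with hNdef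
  have hNnn : ∀ x, 0 ≤ N x := fun x =>
    Finset.sum_nonneg fun i _ => by positivity
  have h0T : (0 : ℝ) ∈ Set.Icc (0 : ℝ) T := ⟨le_refl 0, hT.le⟩
  obtain ⟨c₁, hc₁⟩ := hexp (ε / 2) (by positivity)
  obtain ⟨c₂, hc₂⟩ := hexp (2 * lam - ε) (by linarith)
  -- nonnegativity of the constants
  have hc₁nn : 0 ≤ c₁ := by
    have h := (hc₁ 0 h0T (fun _ => 0)).2
    simp only [Int.natAbs_zero, Nat.cast_zero, Finset.sum_const_zero, mul_zero,
      Real.exp_zero, mul_one] at h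
    refine le_trans (tsum_nonneg fun y => ?_) h
    exact mul_nonneg (hpos 0 h0T _ y) (Real.exp_nonneg _)
  have hc₂nn : 0 ≤ c₂ := by
    have h := (hc₂ 0 h0T (fun _ => 0)).2
    simp only [Int.natAbs_zero, Nat.cast_zero, Finset.sum_const_zero, mul_zero,
      Real.exp_zero, mul_one] at h
    refine le_trans (tsum_nonneg fun y => ?_) h
    exact mul_nonneg (hpos 0 h0T _ y) (Real.exp_nonneg _)
  -- summability facts
  have hsum_lam : ∀ t ∈ Set.Icc (0 : ℝ) T, ∀ x,
      Summable fun y => p t x y * Real.exp (-lam * N y) := by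
    intro t ht x
    refine Summable.of_nonneg_of_le
      (fun y => mul_nonneg (hpos t ht x y) (Real.exp_nonneg _))
      (fun y => ?_) (hc₁ t ht x).1
    exact mul_le_mul_of_nonneg_left
      (Real.exp_le_exp.mpr (by nlinarith [hNnn y])) (hpos t ht x y)
  have hsum_p : ∀ t ∈ Set.Icc (0 : ℝ) T, ∀ x, Summable fun y => p t x y := by
    intro t ht x
    refine Summable.of_nonneg_of_le (fun y => hpos t ht x y) (fun y => ?_) (hc₁ t ht x).1
    nlinarith [hpos t ht x y, Real.one_le_exp (by positivity : (0:ℝ) ≤ (ε/2) * N y)]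
  -- symmetry bound
  have hPbound : ∀ t ∈ Set.Icc (0 : ℝ) T, ∀ x y,
      p t x y * Real.exp ((2 * lam - ε) * N x) ≤ c₂ * Real.exp ((2 * lam - ε) * N y) := by
    intro t ht x y
    have h1 : p t y x * Real.exp ((2 * lam - ε) * N x) ≤
        ∑' z, p t y z * Real.exp ((2 * lam - ε) * N z) :=
      Summable.le_tsum (hc₂ t ht y).1 x
        (fun z _ => mul_nonneg (hpos t ht y z) (Real.exp_nonneg _))
    rw [hsymm t ht x y]
    exact h1.trans (hc₂ t ht y).2
  -- the constant K
  set K : ℝ := ∑' y : Fin d → ℤ, Real.exp (-ε * N y) with hKdef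
  have hKs : Summable fun y : Fin d → ℤ => Real.exp (-ε * N y) := summable_exp_neg_pi hε d
  have hKnn : 0 ≤ K := tsum_nonneg fun y => Real.exp_nonneg _
  refine ⟨Real.sqrt c₂ * (c₁ + K) / 2, fun t ht x => ?_⟩
  constructor
  · -- lower bound
    have hbdd : BddBelow {r : ℝ | ∃ s ∈ Set.Icc (0 : ℝ) T, ∃ x : Fin d → ℤ, p s x x = r} := by
      refine ⟨0, fun r hr => ?_⟩
      obtain ⟨s, hs, z, hz⟩ := hr
      exact hz ▸ hpos s hs z z
    have hle : sInf {r : ℝ | ∃ s ∈ Set.Icc (0 : ℝ) T, ∃ x : Fin d → ℤ, p s x x = r} ≤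
        p t x x := csInf_le hbdd ⟨t, ht, x, rfl⟩
    have h2 : p t x x * Real.exp (-lam * N x) ≤
        ∑' y, p t x y * Real.exp (-lam * N y) :=
      Summable.le_tsum (hsum_lam t ht x) x
        (fun z _ => mul_nonneg (hpos t ht x z) (Real.exp_nonneg _))
    exact le_trans (mul_le_mul_of_nonneg_right hle (Real.exp_nonneg _)) h2
  · -- upper bound
    set S : ℝ := Real.sqrt c₂ * Real.exp ((-lam + ε / 2) * N x) with hSdef
    have hSnn : 0 ≤ S := mul_nonneg (Real.sqrt_nonneg _) (Real.exp_nonneg _)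
    have hpt : ∀ y, p t x y * Real.exp (-lam * N y) ≤
        S / 2 * (p t x y + Real.exp (-ε * N y)) := by
      intro y
      set a := p t x y with hadef
      have hann : 0 ≤ a := hpos t ht x y
      set F := Real.exp (-ε * N y) with hFdef
      set E := Real.exp (-lam * N y) with hEdef
      have hFnn : 0 ≤ F := Real.exp_nonneg _
      have hEnn : 0 ≤ E := Real.exp_nonneg _
      -- key square inequality
      have hS2 : S ^ 2 = c₂ * Real.exp ((-2 * lam + ε) * N x) := by
        rw [hSdef, mul_pow, Real.sq_sqrt hc₂nn, sq (Real.exp _), ← Real.exp_add]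
        congr 2
        ring
      have hkey : (a * E) ^ 2 ≤ S ^ 2 * (a * F) := by
        have hb := hPbound t ht x y
        have h3 : a * E ^ 2 * Real.exp ((2 * lam - ε) * N x) ≤
            c₂ * Real.exp ((2 * lam - ε) * N y) * E ^ 2 := by
          nlinarith [mul_le_mul_of_nonneg_right hb (sq_nonneg E)]
        have hE2 : E ^ 2 = Real.exp (-2 * lam * N y) := by
          rw [hEdef, sq, ← Real.exp_add]; congr 1; ring
        have h4 : Real.exp ((2 * lam - ε) * N y) * E ^ 2 = F := by
          rw [hE2, hFdef, ← Real.exp_add]; congr 1; ring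
        have h5 : a * E ^ 2 * Real.exp ((2 * lam - ε) * N x) ≤ c₂ * F := by
          refine h3.trans (le_of_eq ?_)
          rw [← h4]; ring
        have h6 : a * E ^ 2 ≤ c₂ * F * Real.exp (-(2 * lam - ε) * N x) := by
          have hepos := Real.exp_pos ((2 * lam - ε) * N x)
          calc a * E ^ 2 = a * E ^ 2 * Real.exp ((2*lam-ε)*N x) *
                (Real.exp ((2*lam-ε)*N x))⁻¹ := by field_simp
            _ ≤ c₂ * F * (Real.exp ((2*lam-ε)*N x))⁻¹ :=
                mul_le_mul_of_nonneg_right h5 (by positivity)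
            _ = c₂ * F * Real.exp (-(2 * lam - ε) * N x) := by
                rw [show -(2 * lam - ε) * N x = -((2 * lam - ε) * N x) from by ring,
                  Real.exp_neg]
        calc (a * E) ^ 2 = a * (a * E ^ 2) := by ring
          _ ≤ a * (c₂ * F * Real.exp (-(2 * lam - ε) * N x)) :=
              mul_le_mul_of_nonneg_left h6 hann
          _ = c₂ * Real.exp (-(2 * lam - ε) * N x) * (a * F) := by ring
          _ = S ^ 2 * (a * F) := by
              rw [hS2, show (-2 * lam + ε) * N x = -(2 * lam - ε) * N x from by ring]
      -- conclude via square roots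
      have hM : 0 ≤ S / 2 * (a + F) := by positivity
      have hsq : (a * E) ^ 2 ≤ (S / 2 * (a + F)) ^ 2 := by
        nlinarith [hkey, mul_nonneg (sq_nonneg S) (sq_nonneg (a - F))]
      calc a * E = Real.sqrt ((a * E) ^ 2) := (Real.sqrt_sq (by positivity)).symm
        _ ≤ Real.sqrt ((S / 2 * (a + F)) ^ 2) := Real.sqrt_le_sqrt hsq
        _ = S / 2 * (a + F) := Real.sqrt_sq hM
    -- sum the pointwise bound
    have hsumR : Summable fun y => S / 2 * (p t x y + Real.exp (-ε * N y)) :=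
      (Summable.add (hsum_p t ht x) hKs).mul_left _
    have hmain : (∑' y, p t x y * Real.exp (-lam * N y)) ≤
        ∑' y, S / 2 * (p t x y + Real.exp (-ε * N y)) :=
      (hsum_lam t ht x).tsum_le_tsum hpt hsumR
    rw [tsum_mul_left, Summable.tsum_add (hsum_p t ht x) hKs, ← hKdef] at hmain
    -- bound the total mass of p
    have hP : (∑' y, p t x y) ≤ c₁ * Real.exp ((ε / 2) * N x) := by
      refine le_trans ((hsum_p t ht x).tsum_le_tsum (fun y => ?_) (hc₁ t ht x).1)
        (hc₁ t ht x).2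
      nlinarith [hpos t ht x y, Real.one_le_exp (by positivity : (0:ℝ) ≤ (ε/2) * N y)]
    have hstep : S / 2 * ((∑' y, p t x y) + K) ≤
        S / 2 * (c₁ * Real.exp ((ε / 2) * N x) + K) := by
      apply mul_le_mul_of_nonneg_left _ (by positivity)
      linarith
    refine hmain.trans (hstep.trans ?_)
    -- final algebra
    have hexp1 : (1 : ℝ) ≤ Real.exp ((ε / 2) * N x) :=
      Real.one_le_exp (by positivity)
    have hfin : S / 2 * (c₁ * Real.exp ((ε / 2) * N x) + K) ≤
        S / 2 * ((c₁ + K) * Real.exp ((ε / 2) * N x)) := by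
      apply mul_le_mul_of_nonneg_left _ (by positivity)
      nlinarith [hKnn, hexp1]
    refine hfin.trans (le_of_eq ?_)
    rw [hSdef]
    rw [show Real.sqrt c₂ * (c₁ + K) / 2 *
        Real.exp ((-lam + ε) * N x) =
        Real.sqrt c₂ * (Real.exp ((-lam + ε / 2) * N x) * Real.exp ((ε / 2) * N x)) *
          (c₁ + K) / 2 by rw [← Real.exp_add]; ring_nf]
    ring
end
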